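/- arXiv:2301.04079 — 4 statements merged into one kernel-verified Lean document; each statement's English description precedes it below -/
import Mathlib

section
/- Let C be an abelian category satisfying the minimal cover axiom. Then the category Ch(C) of non-negative chain complexes in C also satisfies the minimal cover axiom. Explicitly, for a chain complex X, the minimal projective cover of X in Ch(C) is isomorphic to the direct sum ⊕_{n≥0} D^n(P_n), where P_n is the minimal projective cover in C of coker(∂_{n+1} : X_{n+1} → X_n), and the covering map restricts in degree n to a lift of the minimal cover P_n → coker(∂_{n+1}) along the quotient X_n → coker(∂_{n+1}). -/
open CategoryTheory CategoryTheory.Limits ZeroObject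

universe v u

variable {C : Type u} [Category.{v} C] [Abelian C]

/-- `p : P ⟶ X` is a minimal projective cover. -/
def IsMinimalProjectiveCover {E : Type*} [Category E] {P X : E} (p : P ⟶ X) : Prop :=
  Projective P ∧ Epi p ∧ ∀ φ : P ⟶ P, φ ≫ p = p → IsIso φ

/-- A category satisfies the minimal cover axiom if every object admits a minimal
projective cover. -/
def HasMinimalCovers (E : Type*) [Category E] : Prop :=
  ∀ X : E, ∃ (P : E) (p : P ⟶ X), IsMinimalProjectiveCover p

/-- Degrees of the disk `D^n(A)`: `A` in degrees `n` and `n - 1`, and `0` elsewhere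
(for `n = 0`, `A` concentrated in degree `0`). -/
noncomputable def diskObj (n : ℕ) (A : C) : ℕ → C := fun i =>
  if i = n ∨ i + 1 = n then A else 0

/-- Differentials of the disk `D^n(A)`: the identity of `A` in degree `n`. -/
noncomputable def diskD (n : ℕ) (A : C) :
    ∀ k : ℕ, diskObj n A (k + 1) ⟶ diskObj n A k := fun k =>
  if h : k + 1 = n then
    eqToHom (if_pos (Or.inl h)) ≫ eqToHom (if_pos (Or.inr h)).symm
  else 0

/-- The disk `D^n(A)`: the chain complex equal to `A` in degrees `n` and `n − 1` with
`n`-th boundary the identity, and `0` elsewhere; `D^0(A)` is `A` concentrated in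
degree `0`. -/
noncomputable def disk (n : ℕ) (A : C) : ChainComplex C ℕ :=
  ChainComplex.of (diskObj n A) (diskD n A) (by
    intro k
    have h2 : ¬(k + 1 + 1 = n) ∨ ¬(k + 1 = n) := by omega
    rcases h2 with h2 | h2 <;> simp [diskD, h2])

/-- Degrees of the suspension of a chain complex. -/
noncomputable def suspObj (X : ChainComplex C ℕ) : ℕ → C
  | 0 => 0
  | n + 1 => X.X n

/-- Differentials of the suspension of a chain complex. -/
noncomputable def suspD (X : ChainComplex C ℕ) :
    ∀ k : ℕ, suspObj X (k + 1) ⟶ suspObj X k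
  | 0 => 0
  | k + 1 => X.d (k + 1) k

/-- The suspension `S(X)` of a non-negative chain complex `X`. -/
noncomputable def susp (X : ChainComplex C ℕ) : ChainComplex C ℕ :=
  ChainComplex.of (suspObj X) (suspD X) (by
    intro k
    match k with
    | 0 => exact comp_zero
    | k + 1 => exact X.d_comp_d _ _ _)

/-- The `n`-fold suspension `Sⁿ(X)` of a non-negative chain complex `X`. -/
noncomputable def suspN : ℕ → ChainComplex C ℕ → ChainComplex C ℕ
  | 0, X => X
  | n + 1, X => susp (suspN n X)

/-- Degrees of the chain complex with `P0` in degree `0` and `P1` in degree `1`. -/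
noncomputable def twoObj (P0 P1 : C) : ℕ → C
  | 0 => P0
  | 1 => P1
  | _ + 2 => 0

/-- Differentials of the chain complex with `P1 ⟶ P0` concentrated in degrees `1`, `0`. -/
noncomputable def twoD {P0 P1 : C} (d : P1 ⟶ P0) :
    ∀ k : ℕ, twoObj P0 P1 (k + 1) ⟶ twoObj P0 P1 k
  | 0 => d
  | _ + 1 => 0

/-- The chain complex concentrated in degrees `0` and `1`, given by a morphism
`d : P1 ⟶ P0`. -/
noncomputable def twoComplex {P0 P1 : C} (d : P1 ⟶ P0) : ChainComplex C ℕ :=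
  ChainComplex.of (twoObj P0 P1) (twoD d) (by
    intro k
    exact zero_comp)

/-- `IsMinimalLen1Resolution d p` expresses that `0 ⟶ P1 ⟶ P0 ⟶ A ⟶ 0` is a minimal
projective resolution of `A` of length at most 1: `d` is a monomorphism,
`p : P0 ⟶ A` is a minimal projective cover, and the induced morphism
`P1 ⟶ ker p` is a minimal projective cover. -/
def IsMinimalLen1Resolution {P1 P0 A : C} (d : P1 ⟶ P0) (p : P0 ⟶ A) : Prop :=
  Mono d ∧ ∃ w : d ≫ p = 0,
    IsMinimalProjectiveCover p ∧ IsMinimalProjectiveCover (kernel.lift p d w)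

/-- An object has projective dimension at most 1: it admits a projective resolution
`0 ⟶ P1 ⟶ P0 ⟶ A ⟶ 0` of length at most 1. -/
def ProjDimLE1 (A : C) : Prop :=
  ∃ (P1 P0 : C) (d : P1 ⟶ P0) (p : P0 ⟶ A) (w : d ≫ p = 0),
    Projective P1 ∧ Projective P0 ∧ Mono d ∧ Epi p ∧ (ShortComplex.mk d p w).Exact

/-- The direct sum `⊕_{n ≥ 0} Dⁿ(P n)` of disks: in degree `k` it equals `P k ⊕ P (k+1)`,
with differential sending the first summand of degree `k + 1` identically onto the second
summand of degree `k`. -/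
noncomputable def diskSum (P : ℕ → C) : ChainComplex C ℕ :=
  ChainComplex.of (fun k => P k ⊞ P (k + 1))
    (fun _ => biprod.fst ≫ biprod.inr) (by intro k; simp)

/-!
A chain map out of `⊕ₙ Dⁿ(Pₙ)` is the same as a family of maps `Pₙ ⟶ Xₙ`, so the sum is
projective when every `Pₙ` is. The map built from lifts `sₙ` of the minimal covers
`Pₙ ⟶ coker ∂ₙ₊₁` is epi in degree `n`: `sₙ` hits `Xₙ` modulo boundaries, and `sₙ₊₁ ≫ ∂`
hits the boundaries since `sₙ₊₁` hits `Xₙ₊₁` modulo `im ∂ₙ₊₂ ⊆ ker ∂ₙ₊₁`. An endomorphism `φ`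
of the sum over this map is upper triangular in each degree `P n ⊞ P (n + 1)`, and its
diagonal entries lie over the minimal covers `Pₙ ⟶ coker ∂ₙ₊₁`, hence are isomorphisms; so `φ`
is one.
-/

lemma Biprod.isIso_of_inr_comp_eq {X₁ X₂ : C} (f : X₁ ⊞ X₂ ⟶ X₁ ⊞ X₂) {e : X₂ ⟶ X₂}
    (hf : biprod.inr ≫ f = e ≫ biprod.inr) (he : IsIso e)
    (ha : IsIso (biprod.inl ≫ f ≫ biprod.fst)) : IsIso f := by
  set a := biprod.inl ≫ f ≫ biprod.fst
  set b := biprod.inl ≫ f ≫ biprod.snd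
  have hf' : f = Biprod.ofComponents a b 0 e := by
    conv_lhs => rw [← Biprod.ofComponents_eq f]
    simp [reassoc_of% hf, a, b]
  rw [hf']
  refine ⟨Biprod.ofComponents (inv a) (-(inv a ≫ b ≫ inv e)) 0 (inv e), ?_, ?_⟩ <;>
    apply biprod.hom_ext' <;> apply biprod.hom_ext <;> simp [Biprod.ofComponents]

lemma eq_zero_of_comp_eq_zero_of_epi_comp_cokernel_π {P Y X T : C} {s : P ⟶ X} {d : Y ⟶ X}
    [Epi (s ≫ cokernel.π d)] {t : X ⟶ T} (hs : s ≫ t = 0) (hd : d ≫ t = 0) : t = 0 := by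
  have hdesc : cokernel.desc d t hd = 0 := by
    rw [← cancel_epi (s ≫ cokernel.π d)]
    simpa using hs
  rw [← cokernel.π_desc d t hd, hdesc, comp_zero]

namespace diskSum

variable {P : ℕ → C} {X : ChainComplex C ℕ}

-- The biproduct maps retyped with `(diskSum P).X n`, which `rw` and `simp` do not unfold.
noncomputable def inl (n : ℕ) : P n ⟶ (diskSum P).X n := biprod.inl
noncomputable def inr (n : ℕ) : P (n + 1) ⟶ (diskSum P).X n := biprod.inr
noncomputable def fst (n : ℕ) : (diskSum P).X n ⟶ P n := biprod.fst
noncomputable def snd (n : ℕ) : (diskSum P).X n ⟶ P (n + 1) := biprod.snd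

lemma inl_fst (n : ℕ) : inl n ≫ fst n = 𝟙 (P n) := biprod.inl_fst

lemma total (n : ℕ) : fst n ≫ inl n + snd n ≫ inr n = 𝟙 ((diskSum P).X n) := biprod.total

lemma X_hom_ext {n : ℕ} {T : C} {f g : (diskSum P).X n ⟶ T} (hl : inl n ≫ f = inl n ≫ g)
    (hr : inr n ≫ f = inr n ≫ g) : f = g :=
  biprod.hom_ext' _ _ hl hr

lemma d_succ (P : ℕ → C) (n : ℕ) : (diskSum P).d (n + 1) n = fst (n + 1) ≫ inr n :=
  ChainComplex.of_d (fun k => P k ⊞ P (k + 1)) (fun _ => biprod.fst ≫ biprod.inr) n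

/-- `diskSum P` is free on the `P n`, each placed in the first summand of degree `n`. -/
noncomputable def desc (s : ∀ n, P n ⟶ X.X n) : diskSum P ⟶ X where
  f k := biprod.desc (s k) (s (k + 1) ≫ X.d (k + 1) k)
  comm' := by
    rintro _ k (rfl : k + 1 = _)
    apply biprod.hom_ext' <;> simp [diskSum]

@[simp]
lemma inl_desc_f (s : ∀ n, P n ⟶ X.X n) (n : ℕ) : inl n ≫ (desc s).f n = s n :=
  biprod.inl_desc _ _

@[simp]
lemma inr_desc_f (s : ∀ n, P n ⟶ X.X n) (n : ℕ) :
    inr n ≫ (desc s).f n = s (n + 1) ≫ X.d (n + 1) n :=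
  biprod.inr_desc _ _

@[simp]
lemma inl_desc_f_assoc (s : ∀ n, P n ⟶ X.X n) (n : ℕ) {T : C} (h : X.X n ⟶ T) :
    inl n ≫ (desc s).f n ≫ h = s n ≫ h := by
  rw [← Category.assoc, inl_desc_f]

@[simp]
lemma inr_desc_f_assoc (s : ∀ n, P n ⟶ X.X n) (n : ℕ) {T : C} (h : X.X n ⟶ T) :
    inr n ≫ (desc s).f n ≫ h = s (n + 1) ≫ X.d (n + 1) n ≫ h := by
  rw [← Category.assoc, inr_desc_f, Category.assoc]

lemma inr_f (f : diskSum P ⟶ X) (n : ℕ) :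
    inr n ≫ f.f n = inl (n + 1) ≫ f.f (n + 1) ≫ X.d (n + 1) n := by
  rw [f.comm, d_succ, ← Category.assoc, ← Category.assoc, inl_fst, Category.id_comp]

lemma hom_ext {f g : diskSum P ⟶ X} (h : ∀ n, inl n ≫ f.f n = inl n ≫ g.f n) : f = g := by
  ext n
  apply X_hom_ext (h n)
  rw [inr_f, inr_f, reassoc_of% h (n + 1)]

lemma desc_comp {Y : ChainComplex C ℕ} (s : ∀ n, P n ⟶ X.X n) (g : X ⟶ Y) :
    desc s ≫ g = desc fun n => s n ≫ g.f n :=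
  hom_ext fun n => by simp

lemma projective (hP : ∀ n, Projective (P n)) : Projective (diskSum P) where
  factors {E Y} f e _ := by
    choose l hl using fun n => (hP n).factors (inl n ≫ f.f n) (e.f n)
    exact ⟨desc l, hom_ext fun n => by simp [desc_comp, hl]⟩

lemma epi_desc {s : ∀ n, P n ⟶ X.X n} (hs : ∀ n, Epi (s n ≫ cokernel.π (X.d (n + 1) n))) :
    Epi (desc s) := by
  refine HomologicalComplex.epi_of_epi_f _ fun n => Preadditive.epi_of_cancel_zero _ ?_
  intro T t ht
  have h₁ : s n ≫ t = 0 := by simpa using inl n ≫= ht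
  have h₂ : s (n + 1) ≫ X.d (n + 1) n ≫ t = 0 := by simpa using inr n ≫= ht
  -- `d ≫ t` kills both `s (n + 1)` and the boundaries, hence all of `X (n + 1)`.
  have hd : X.d (n + 1) n ≫ t = 0 :=
    eq_zero_of_comp_eq_zero_of_epi_comp_cokernel_π (d := X.d (n + 2) (n + 1)) h₂
      (by rw [X.d_comp_d_assoc, zero_comp])
  exact eq_zero_of_comp_eq_zero_of_epi_comp_cokernel_π h₁ hd

noncomputable def diag (φ : diskSum P ⟶ diskSum P) (n : ℕ) : P n ⟶ P n :=
  inl n ≫ φ.f n ≫ fst n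

lemma inr_comp_f (φ : diskSum P ⟶ diskSum P) (n : ℕ) :
    inr n ≫ φ.f n = diag φ (n + 1) ≫ inr n := by
  simp [inr_f, d_succ, diag]

lemma inl_comp_f (φ : diskSum P ⟶ diskSum P) (n : ℕ) :
    inl n ≫ φ.f n = diag φ n ≫ inl n + (inl n ≫ φ.f n ≫ snd n) ≫ inr n := by
  conv_lhs => rw [← Category.comp_id (φ.f n), ← total]
  simp [diag]

lemma isIso_of_comp_desc_eq {s : ∀ n, P n ⟶ X.X n}
    (hs : ∀ n (ψ : P n ⟶ P n), ψ ≫ s n ≫ cokernel.π (X.d (n + 1) n) =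
      s n ≫ cokernel.π (X.d (n + 1) n) → IsIso ψ)
    (φ : diskSum P ⟶ diskSum P) (hφ : φ ≫ desc s = desc s) : IsIso φ := by
  have hdiag (n : ℕ) : IsIso (diag φ n) := by
    refine hs n _ ?_
    have hn := inl n ≫= HomologicalComplex.congr_hom hφ n =≫ cokernel.π (X.d (n + 1) n)
    rw [HomologicalComplex.comp_f, Category.assoc, reassoc_of% (inl_comp_f φ n)] at hn
    simpa using hn
  have (n : ℕ) : IsIso (φ.f n) :=
    Biprod.isIso_of_inr_comp_eq (φ.f n) (inr_comp_f φ n) (hdiag (n + 1)) (hdiag n)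
  exact HomologicalComplex.Hom.isIso_of_components φ

lemma isMinimalProjectiveCover_desc {s : ∀ n, P n ⟶ X.X n}
    (hs : ∀ n, IsMinimalProjectiveCover (s n ≫ cokernel.π (X.d (n + 1) n))) :
    IsMinimalProjectiveCover (desc s) :=
  ⟨projective fun n => (hs n).1, epi_desc fun n => (hs n).2.1,
    isIso_of_comp_desc_eq fun n => (hs n).2.2⟩

end diskSum

/-- If `C` is an abelian category satisfying the minimal cover axiom, then
so does the category of non-negative chain complexes `Ch(C)`.  Explicitly, for a chain
complex `X`, given minimal projective covers `c n : P n ⟶ coker (∂_{n+1})` in `C` and lifts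
`s n : P n ⟶ X n` of them along the quotients `X n ⟶ coker (∂_{n+1})`, the chain map
`⊕_{n ≥ 0} Dⁿ(P n) ⟶ X` which in degree `n` restricts to `s n` on `P n` (and to
`s (n+1) ≫ ∂_{n+1}` on `P (n+1)`) is a minimal projective cover of `X` in `Ch(C)`. -/
theorem hasMinimalCovers_chainComplex
    (hC : HasMinimalCovers C) :
    HasMinimalCovers (ChainComplex C ℕ) ∧
    ∀ (X : ChainComplex C ℕ) (P : ℕ → C)
      (c : ∀ n : ℕ, P n ⟶ cokernel (X.d (n + 1) n)),
      (∀ n : ℕ, IsMinimalProjectiveCover (c n)) →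
      ∀ s : ∀ n : ℕ, P n ⟶ X.X n,
        (∀ n : ℕ, s n ≫ cokernel.π (X.d (n + 1) n) = c n) →
        ∃ α : diskSum P ⟶ X,
          (∀ k : ℕ, α.f k = biprod.desc (s k) (s (k + 1) ≫ X.d (k + 1) k)) ∧
          IsMinimalProjectiveCover α := by
  refine ⟨fun X => ?_, fun X P c hc s hs =>
    ⟨diskSum.desc s, fun _ => rfl, diskSum.isMinimalProjectiveCover_desc fun n => hs n ▸ hc n⟩⟩
  choose P c hc using fun n => hC (cokernel (X.d (n + 1) n))
  choose s hs using fun n => (hc n).1.factors (c n) (cokernel.π _)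
  exact ⟨diskSum P, diskSum.desc s, diskSum.isMinimalProjectiveCover_desc fun n => hs n ▸ hc n⟩
end

section
/- Let C be an abelian category satisfying the minimal cover axiom. Assume X is a non-negative chain complex in C such that X_n is projective for every n ≥ 0 and the homology H_n(X) has projective dimension at most 1 for every n ≥ 0. Then X is isomorphic to ⊕_{n≥0} ( S^n(P[n]) ⊕ D^{n+1}(Y_n) ), where, for every n ≥ 0, P[n] is the minimal projective resolution of H_n(X) (a chain complex concentrated in degrees 0 and 1) and Y_n is a projective object of C. -/
open CategoryTheory CategoryTheory.Limits ZeroObject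

universe v u

variable {C : Type u} [Category.{v} C] [Abelian C]

/-- Degrees of the direct sum `⊕ₙ (Sⁿ(P[n]) ⊕ D^{n+1}(Y n))`, where `P[n]` is the chain
complex with `P1 n ⟶ P0 n` concentrated in degrees `1`, `0`.  In degree `k` this direct sum
equals `(P0 k ⊕ P1 (k-1)) ⊕ (Y k ⊕ Y (k-1))` (the summands involving `k - 1` being absent
for `k = 0`). -/
noncomputable def structObj (P0 P1 Y : ℕ → C) : ℕ → C
  | 0 => P0 0 ⊞ Y 0
  | k + 1 => (P0 (k + 1) ⊞ P1 k) ⊞ (Y (k + 1) ⊞ Y k)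

/-- Differentials of the direct sum `⊕ₙ (Sⁿ(P[n]) ⊕ D^{n+1}(Y n))`: the differential
`dP k : P1 k ⟶ P0 k` on the summand `Sᵏ(P[k])` and the identity of `Y k` on the summand
`D^{k+1}(Y k)`. -/
noncomputable def structD (P0 P1 Y : ℕ → C) (dP : ∀ n : ℕ, P1 n ⟶ P0 n) :
    ∀ k : ℕ, structObj P0 P1 Y (k + 1) ⟶ structObj P0 P1 Y k
  | 0 => biprod.desc (biprod.desc 0 (dP 0 ≫ biprod.inl)) (biprod.desc 0 biprod.inr)
  | k + 1 =>
    biprod.desc (biprod.desc 0 (dP (k + 1) ≫ biprod.inl ≫ biprod.inl))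
      (biprod.desc 0 (biprod.inl ≫ biprod.inr))

/-- The chain complex `⊕ₙ (Sⁿ(P[n]) ⊕ D^{n+1}(Y n))`. -/
noncomputable def structComplex (P0 P1 Y : ℕ → C) (dP : ∀ n : ℕ, P1 n ⟶ P0 n) :
    ChainComplex C ℕ :=
  ChainComplex.of (structObj P0 P1 Y) (structD P0 P1 Y dP) (by
    intro k
    match k with
    | 0 =>
      show (biprod.desc (biprod.desc 0 (dP 1 ≫ biprod.inl ≫ biprod.inl))
          (biprod.desc 0 (biprod.inl ≫ biprod.inr)) :
          (P0 2 ⊞ P1 1) ⊞ (Y 2 ⊞ Y 1) ⟶ (P0 1 ⊞ P1 0) ⊞ (Y 1 ⊞ Y 0)) ≫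
        (biprod.desc (biprod.desc 0 (dP 0 ≫ biprod.inl)) (biprod.desc 0 biprod.inr) :
          _ ⟶ P0 0 ⊞ Y 0) = 0
      apply biprod.hom_ext' <;> apply biprod.hom_ext' <;> simp
    | k + 1 =>
      show (biprod.desc (biprod.desc 0 (dP (k + 2) ≫ biprod.inl ≫ biprod.inl))
          (biprod.desc 0 (biprod.inl ≫ biprod.inr)) :
          (P0 (k + 3) ⊞ P1 (k + 2)) ⊞ (Y (k + 3) ⊞ Y (k + 2)) ⟶
            (P0 (k + 2) ⊞ P1 (k + 1)) ⊞ (Y (k + 2) ⊞ Y (k + 1))) ≫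
        (biprod.desc (biprod.desc 0 (dP (k + 1) ≫ biprod.inl ≫ biprod.inl))
          (biprod.desc 0 (biprod.inl ≫ biprod.inr)) :
          _ ⟶ (P0 (k + 1) ⊞ P1 k) ⊞ (Y (k + 1) ⊞ Y k)) = 0
      apply biprod.hom_ext' <;> apply biprod.hom_ext' <;> simp)


/-!
Every cycle object `Zₙ` is projective: `Z₀ = X₀`, and if `Zₙ` is projective then so is the
boundary object `Bₙ = ker (Zₙ ↠ Hₙ)`, because `Hₙ` has projective dimension at most one; hence
`Xₙ₊₁ ↠ Bₙ` splits and `Zₙ₊₁` is a direct summand of `Xₙ₊₁`.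
Minimality of the cover `P₀ ↠ Hₙ` splits it off `Zₙ ↠ Hₙ`, so `Zₙ ≅ P₀ ⊕ Kₙ` with `Kₙ` mapping
to zero in `Hₙ`, and then `Bₙ ≅ P₁ ⊕ Kₙ` with `P₁ = ker (P₀ ↠ Hₙ)` projective. Altogether
`Xₙ₊₁ ≅ Zₙ₊₁ ⊕ Bₙ ≅ (P₀ ⊕ Kₙ₊₁) ⊕ (P₁ ⊕ Kₙ)`, and under these isomorphisms the differential is
`P₁ ↪ P₀` on the first summand and the identity of `Kₙ`, which is the differential of
`⊕ₙ (Sⁿ(P[n]) ⊕ Dⁿ⁺¹(Kₙ))`.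
-/

lemma ProjDimLE1.hasProjectiveDimensionLT {A : C} (hA : ProjDimLE1 A) :
    HasProjectiveDimensionLT A 2 := by
  obtain ⟨P1, P0, d, p, w, hP1, hP0, hd, hp, hexact⟩ := hA
  have hS : (ShortComplex.mk d p w).ShortExact := { exact := hexact, mono_f := hd, epi_g := hp }
  exact hS.hasProjectiveDimensionLT_X₃ 1 inferInstance inferInstance

lemma projective_kernel_of_projDimLE1 {P A : C} [Projective P] (p : P ⟶ A) [Epi p]
    (hA : ProjDimLE1 A) : Projective (kernel p) := by
  have hS : (ShortComplex.mk (kernel.ι p) p (kernel.condition p)).ShortExact :=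
    { exact := ShortComplex.exact_of_f_is_kernel _ (kernelIsKernel p) }
  rw [projective_iff_hasProjectiveDimensionLT_one]
  exact (hS.hasProjectiveDimensionLT_X₃_iff 0 ‹_›).1 hA.hasProjectiveDimensionLT

lemma isMinimalProjectiveCover_id {E : Type*} [Category E] (P : E) [Projective P] :
    IsMinimalProjectiveCover (𝟙 P) :=
  ⟨‹_›, inferInstance, fun φ hφ => by rw [Category.comp_id] at hφ; subst hφ; infer_instance⟩

lemma IsMinimalProjectiveCover.isMinimalLen1Resolution_kernel_ι {P A : C} {p : P ⟶ A}
    (hp : IsMinimalProjectiveCover p) [Projective (kernel p)] :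
    IsMinimalLen1Resolution (kernel.ι p) p :=
  ⟨inferInstance, kernel.condition p, hp, by
    rw [show kernel.lift p (kernel.ι p) _ = 𝟙 _ by ext; simp]
    exact isMinimalProjectiveCover_id _⟩

lemma IsMinimalProjectiveCover.exists_biprod_iso {P A Z : C} {p : P ⟶ A}
    (hp : IsMinimalProjectiveCover p) [Projective Z] (π : Z ⟶ A) [Epi π] :
    ∃ (K : C) (e : P ⊞ K ≅ Z), e.hom ≫ π = biprod.fst ≫ p := by
  obtain ⟨hP, hpEpi, hmin⟩ := hp
  let u : P ⟶ Z := Projective.factorThru p π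
  let v : Z ⟶ P := Projective.factorThru π p
  have hvp : v ≫ p = π := Projective.factorThru_comp _ _
  have huvp : (u ≫ v) ≫ p = p := by
    rw [Category.assoc, hvp]; exact Projective.factorThru_comp _ _
  have : IsIso (u ≫ v) := hmin _ huvp
  let r : Z ⟶ P := v ≫ inv (u ≫ v)
  have hur : u ≫ r = 𝟙 P := by rw [← Category.assoc, IsIso.hom_inv_id]
  have hrp : r ≫ p = π := by
    have : inv (u ≫ v) ≫ p = p := by rw [IsIso.inv_comp_eq, huvp]
    rw [Category.assoc, this, hvp]
  let s := ShortComplex.Splitting.ofExactOfSection (ShortComplex.mk (kernel.ι r) r (by simp))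
    (ShortComplex.exact_of_f_is_kernel _ (kernelIsKernel r)) u hur (by dsimp; infer_instance)
  refine ⟨kernel r, biprod.braiding P (kernel r) ≪≫ s.isoBinaryBiproduct.symm, ?_⟩
  apply biprod.hom_ext' <;> simp [biprod.braiding, ← hrp, s.s_g_assoc]

noncomputable def isKernelBiprodMapKernelι {P A Z K : C} (p : P ⟶ A) (π : Z ⟶ A)
    (e : P ⊞ K ≅ Z) (he : e.hom ≫ π = biprod.fst ≫ p) :
    IsLimit (KernelFork.ofι (f := π) (biprod.map (kernel.ι p) (𝟙 K) ≫ e.hom) (by simp [he])) :=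
  KernelFork.IsLimit.ofι' _ _ (fun k hk =>
    ⟨biprod.lift (kernel.lift p (k ≫ e.inv ≫ biprod.fst) (by
        rw [Category.assoc, Category.assoc, ← he, e.inv_hom_id_assoc, hk]))
      (k ≫ e.inv ≫ biprod.snd), by
      rw [← cancel_mono e.inv]; ext <;> simp⟩)

noncomputable def biprodInterchange (A B A' B' : C) :
    (A ⊞ B) ⊞ (A' ⊞ B') ≅ (A ⊞ A') ⊞ (B ⊞ B') where
  hom := biprod.desc (biprod.desc (biprod.inl ≫ biprod.inl) (biprod.inl ≫ biprod.inr))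
    (biprod.desc (biprod.inr ≫ biprod.inl) (biprod.inr ≫ biprod.inr))
  inv := biprod.desc (biprod.desc (biprod.inl ≫ biprod.inl) (biprod.inl ≫ biprod.inr))
    (biprod.desc (biprod.inr ≫ biprod.inl) (biprod.inr ≫ biprod.inr))

namespace ChainComplex

variable (X : ChainComplex C ℕ)

/-- `B` plays the role of the boundaries `Bₙ`: the corestriction `Xₙ₊₁ ↠ B` of the differential
is split by projectivity of `B`, and its kernel is `Zₙ₊₁`. -/
lemma exists_splitting_of_isKernel_homologyπ (n : ℕ) {B : C} [Projective B]
    (j : B ⟶ X.cycles n) (w : j ≫ X.homologyπ n = 0) (hj : IsLimit (KernelFork.ofι j w)) :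
    ∃ σ : B ⟶ X.X (n + 1),
      σ ≫ X.d (n + 1) n = j ≫ X.iCycles n ∧ IsIso (biprod.desc (X.iCycles (n + 1)) σ) := by
  have : Mono j := Fork.IsLimit.mono hj
  let t : X.X (n + 1) ⟶ B := hj.lift (KernelFork.ofι _ (X.toCycles_comp_homologyπ (n + 1) n))
  have ht : t ≫ j = X.toCycles (n + 1) n := Fork.IsLimit.lift_ι hj
  have hd : t ≫ j ≫ X.iCycles n = X.d (n + 1) n := by
    rw [reassoc_of% ht, HomologicalComplex.toCycles_i]
  have hit : X.iCycles (n + 1) ≫ t = 0 := by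
    rw [← cancel_mono (j ≫ X.iCycles n), Category.assoc, hd, zero_comp, X.iCycles_d]
  have hexact : (ShortComplex.mk _ _ (X.toCycles_comp_homologyπ (n + 1) n)).Exact :=
    ShortComplex.exact_of_g_is_cokernel _ (X.homologyIsCokernel (n + 1) n (by simp))
  have : Epi t := by
    have ht' : t = kernel.lift _ _ (X.toCycles_comp_homologyπ (n + 1) n) ≫
        (IsLimit.conePointUniqueUpToIso (kernelIsKernel _) hj).hom := by
      simp only [Fork.ofι_pt, IsLimit.lift_comp_conePointUniqueUpToIso_hom, t]
    have := hexact.epi_kernelLift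
    rw [ht']
    infer_instance
  have hS : (ShortComplex.mk _ _ hit).ShortExact :=
    { exact := ShortComplex.exact_of_f_is_kernel _
        (isKernelOfComp _ _ (X.cyclesIsKernel (n + 1) n (by simp)) hit hd) }
  let s := hS.splittingOfProjective
  exact ⟨s.s, by rw [← hd, s.s_g_assoc], s.isoBinaryBiproduct.symm.isIso_hom⟩

lemma projective_cycles_succ (n : ℕ) [Projective (X.X (n + 1))] [Projective (X.cycles n)]
    (hpd : ProjDimLE1 (X.homology n)) : Projective (X.cycles (n + 1)) := by
  have := projective_kernel_of_projDimLE1 (X.homologyπ n) hpd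
  obtain ⟨σ, -, hσ⟩ :=
    X.exists_splitting_of_isKernel_homologyπ n _ (kernel.condition _) (kernelIsKernel _)
  have hinl : X.iCycles (n + 1) ≫ inv (biprod.desc (X.iCycles (n + 1)) σ) = biprod.inl := by
    rw [IsIso.comp_inv_eq, biprod.inl_desc]
  exact Retract.projective ⟨_, _, by rw [reassoc_of% hinl, biprod.inl_fst]⟩

lemma projective_cycles (hX : ∀ n, Projective (X.X n)) (hpd : ∀ n, ProjDimLE1 (X.homology n)) :
    ∀ n, Projective (X.cycles n)
  | 0 => Projective.of_iso (X.iCyclesIso 0 0 (by simp) (X.shape 0 0 (by simp))).symm (hX 0)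
  | n + 1 =>
    have := hX (n + 1)
    have := projective_cycles hX hpd n
    X.projective_cycles_succ n (hpd n)

lemma exists_biprod_iso_cycles_of_isMinimalProjectiveCover (n : ℕ) [Projective (X.cycles n)]
    (hpd : ProjDimLE1 (X.homology n)) {P : C} {p : P ⟶ X.homology n}
    (hp : IsMinimalProjectiveCover p) :
    ∃ (K : C) (e : P ⊞ K ≅ X.cycles n) (σ : kernel p ⊞ K ⟶ X.X (n + 1)), Projective K ∧
      σ ≫ X.d (n + 1) n = biprod.map (kernel.ι p) (𝟙 K) ≫ e.hom ≫ X.iCycles n ∧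
      IsIso (biprod.desc (X.iCycles (n + 1)) σ) := by
  obtain ⟨K, e, he⟩ := hp.exists_biprod_iso (X.homologyπ n)
  have : Projective P := hp.1
  have : Epi p := hp.2.1
  have := projective_kernel_of_projDimLE1 p hpd
  have : Projective K := Retract.projective ⟨biprod.inr ≫ e.hom, e.inv ≫ biprod.snd, by simp⟩
  obtain ⟨σ, hσd, hσ⟩ :=
    X.exists_splitting_of_isKernel_homologyπ n _ _ (isKernelBiprodMapKernelι p _ e he)
  exact ⟨K, e, σ, ‹_›, by simpa using hσd, hσ⟩

end ChainComplex

section StructComplex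

variable {P0 P1 Y : ℕ → C} (dP : ∀ n, P1 n ⟶ P0 n)

-- `structD` is elaborated with raw numeral literals in the types of its components, which
-- `simp` cannot match against; these restate it with clean types.
lemma structD_zero : structD P0 P1 Y dP 0 =
    (biprod.desc (biprod.desc 0 (dP 0 ≫ biprod.inl)) (biprod.desc 0 biprod.inr) :
      (P0 1 ⊞ P1 0) ⊞ (Y 1 ⊞ Y 0) ⟶ P0 0 ⊞ Y 0) := rfl

lemma structD_succ (k : ℕ) : structD P0 P1 Y dP (k + 1) =
    (biprod.desc (biprod.desc 0 (dP (k + 1) ≫ biprod.inl ≫ biprod.inl))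
        (biprod.desc 0 (biprod.inl ≫ biprod.inr)) :
      (P0 (k + 1 + 1) ⊞ P1 (k + 1)) ⊞ (Y (k + 1 + 1) ⊞ Y (k + 1)) ⟶
        (P0 (k + 1) ⊞ P1 k) ⊞ (Y (k + 1) ⊞ Y k)) := rfl

variable (X : ChainComplex C ℕ) (e : ∀ n, P0 n ⊞ Y n ≅ X.cycles n)
  (σ : ∀ n, P1 n ⊞ Y n ⟶ X.X (n + 1)) [∀ n, IsIso (biprod.desc (X.iCycles (n + 1)) (σ n))]

noncomputable def structComplexXIso : ∀ k, structObj P0 P1 Y k ≅ X.X k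
  | 0 => e 0 ≪≫ X.iCyclesIso 0 0 (by simp) (X.shape 0 0 (by simp))
  | k + 1 => biprodInterchange (P0 (k + 1)) (P1 k) (Y (k + 1)) (Y k) ≪≫
      biprod.mapIso (e (k + 1)) (Iso.refl _) ≪≫ asIso (biprod.desc (X.iCycles (k + 1)) (σ k))

lemma structComplexXIso_comm
    (hσ : ∀ n, σ n ≫ X.d (n + 1) n = biprod.map (dP n) (𝟙 (Y n)) ≫ (e n).hom ≫ X.iCycles n)
    (k : ℕ) :
    (structComplexXIso X e σ (k + 1)).hom ≫ X.d (k + 1) k =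
      structD P0 P1 Y dP k ≫ (structComplexXIso X e σ k).hom := by
  cases k <;> simp only [structD_zero, structD_succ] <;>
    dsimp only [structComplexXIso, structObj] <;>
    apply biprod.hom_ext' <;> apply biprod.hom_ext' <;> simp [biprodInterchange, hσ]

lemma nonempty_iso_structComplex
    (hσ : ∀ n, σ n ≫ X.d (n + 1) n = biprod.map (dP n) (𝟙 (Y n)) ≫ (e n).hom ≫ X.iCycles n) :
    Nonempty (X ≅ structComplex P0 P1 Y dP) := by
  refine ⟨(HomologicalComplex.Hom.isoOfComponents (structComplexXIso X e σ) ?_).symm⟩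
  rintro _ k rfl
  dsimp only [structComplex]
  rw [ChainComplex.of_d]
  exact structComplexXIso_comm dP X e σ hσ k

end StructComplex

/-- **Statement 5 (structure theorem for cofibrant objects).**  Let `C` be an abelian
category satisfying the minimal cover axiom, and `X` a non-negative chain complex in `C`
with `X n` projective for every `n` and `H_n(X)` of projective dimension at most 1 for
every `n`.  Then `X ≅ ⊕ₙ (Sⁿ(P[n]) ⊕ D^{n+1}(Y n))`, where `P[n]` is the minimal
projective resolution of `H_n(X)` (concentrated in degrees `0` and `1`) and each `Y n` is
projective. -/
theorem structure_theorem_for_cofibrant_chain_complexes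
    (hC : HasMinimalCovers C)
    (X : ChainComplex C ℕ) (hcof : ∀ n : ℕ, Projective (X.X n))
    (hpd : ∀ n : ℕ, ProjDimLE1 (X.homology n)) :
    ∃ (P0 P1 : ℕ → C) (dP : ∀ n : ℕ, P1 n ⟶ P0 n)
      (p : ∀ n : ℕ, P0 n ⟶ X.homology n) (Y : ℕ → C),
      (∀ n : ℕ, IsMinimalLen1Resolution (dP n) (p n)) ∧
      (∀ n : ℕ, Projective (Y n)) ∧
      Nonempty (X ≅ structComplex P0 P1 Y dP) := by
  choose P0 p hp using fun n => hC (X.homology n)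
  have := X.projective_cycles hcof hpd
  have hker (n : ℕ) : Projective (kernel (p n)) :=
    have := (hp n).1
    have := (hp n).2.1
    projective_kernel_of_projDimLE1 (p n) (hpd n)
  choose Y e σ hY hσ hsplit using
    fun n => X.exists_biprod_iso_cycles_of_isMinimalProjectiveCover n (hpd n) (hp n)
  exact ⟨P0, fun n => kernel (p n), fun n => kernel.ι (p n), p, Y,
    fun n => (hp n).isMinimalLen1Resolution_kernel_ι, hY,
    nonempty_iso_structComplex (fun n => kernel.ι (p n)) X e σ hσ⟩
end

section
/- Let C be an abelian category satisfying the minimal cover axiom, and let X be a non-negative chain complex in C such that X_n is projective for every n ≥ 0 and H_n(X) has projective dimension at most 1 for every n ≥ 0. Let m ≥ 0 be such that X_i = 0 for all i < m. Then X is isomorphic to S^m(P[m]) ⊕ X', where P[m] is the minimal projective resolution of H_m(X) and X' is a chain complex with X'_n projective for every n and H_m(X') = 0. -/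
open CategoryTheory CategoryTheory.Limits ZeroObject

universe v u

variable {C : Type u} [Category.{v} C] [Abelian C]

/-! By induction on `m`: if `X₀ = 0` then `X ≅ S(desusp X)` with `(desusp X)ₙ = Xₙ₊₁`, and
`H_{n+1}(S Y) ≅ H_n(Y)`, so it suffices to treat `m = 0`.

A minimal projective resolution `0 → P₁ → P₀ → H₀(X) → 0` exists: the kernel of a minimal
cover `P₀ → A` is a retract of the kernel of any projective cover of `A`, hence projective when
`pd A ≤ 1`, and a minimal cover of a projective object is an isomorphism. Lift `P₀ → H₀(X)` to
`s₀ : P₀ → X₀` along `X₀ → H₀(X) = coker (X₁ → X₀)`, and `P₁ → P₀ → X₀` to `X₁`. Minimality of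
`P₀ → H₀(X)` makes `s₀` split, and since `P₁ → P₀` is mono the splitting descends to degree 1.
So `P[0]` is a direct summand of `X`, and its complement has `H₀ = 0` because `P[0] → X` is
onto on `H₀`. -/

section MinimalCover

variable {E : Type*} [Category E]

theorem IsMinimalProjectiveCover.exists_retraction {P Q A : E} {p : P ⟶ A}
    (hp : IsMinimalProjectiveCover p) [Projective Q] {q : Q ⟶ A} {s : P ⟶ Q}
    (hs : s ≫ q = p) : ∃ r : Q ⟶ P, s ≫ r = 𝟙 P ∧ r ≫ p = q := by
  obtain ⟨-, _, hmin⟩ := hp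
  obtain ⟨r, hr⟩ := Projective.factors q p
  have : IsIso (s ≫ r) := hmin _ (by rw [Category.assoc, hr, hs])
  have hinv : inv (s ≫ r) ≫ p = p := by
    rw [IsIso.inv_comp_eq, Category.assoc, hr, hs]
  exact ⟨r ≫ inv (s ≫ r), by rw [← Category.assoc, IsIso.hom_inv_id],
    by rw [Category.assoc, hinv, hr]⟩

theorem IsMinimalProjectiveCover.isIso_of_projective {P A : E} {p : P ⟶ A}
    (hp : IsMinimalProjectiveCover p) [Projective A] : IsIso p := by
  obtain ⟨r, hpr, hrp⟩ := hp.exists_retraction (q := 𝟙 A) (Category.comp_id p)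
  exact ⟨r, hpr, hrp⟩

theorem IsMinimalProjectiveCover.comp_iso {P A B : E} {p : P ⟶ A}
    (hp : IsMinimalProjectiveCover p) (e : A ≅ B) : IsMinimalProjectiveCover (p ≫ e.hom) := by
  obtain ⟨hP, _, hmin⟩ := hp
  exact ⟨hP, epi_comp _ _, fun φ hφ => hmin φ (by simpa using hφ =≫ e.inv)⟩

end MinimalCover

section Resolutions

theorem IsMinimalProjectiveCover.projective_kernel {A P : C} {p : P ⟶ A}
    (hp : IsMinimalProjectiveCover p) (hA : ProjDimLE1 A) : Projective (kernel p) := by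
  obtain ⟨Q1, Q0, d, q, w, hQ1, hQ0, _, _, hexact⟩ := hA
  have : Projective P := hp.1
  obtain ⟨s, hs⟩ := Projective.factors p q
  obtain ⟨r, hsr, hrp⟩ := hp.exists_retraction hs
  have hQ1 : Projective (kernel q) :=
    Projective.of_iso (IsLimit.conePointUniqueUpToIso hexact.fIsKernel (limit.isLimit _)) hQ1
  let ρ : Retract (kernel p) (kernel q) :=
    { i := kernel.map p q s (𝟙 A) (by rw [Category.comp_id, hs])
      r := kernel.map q p r (𝟙 A) (by rw [Category.comp_id, hrp])
      retract := by ext; simp [hsr] }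
  exact ρ.projective

theorem exists_isMinimalLen1Resolution (hC : HasMinimalCovers C) {A : C} (hA : ProjDimLE1 A) :
    ∃ (P1 P0 : C) (d : P1 ⟶ P0) (p : P0 ⟶ A), IsMinimalLen1Resolution d p := by
  obtain ⟨P0, p, hp⟩ := hC A
  have := hp.projective_kernel hA
  obtain ⟨P1, g, hg⟩ := hC (kernel p)
  have := hg.isIso_of_projective
  have w : (g ≫ kernel.ι p) ≫ p = 0 := by simp
  have hlift : kernel.lift p (g ≫ kernel.ι p) w = g := by ext; simp
  refine ⟨P1, P0, g ≫ kernel.ι p, p, mono_comp _ _, w, hp, ?_⟩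
  rwa [hlift]

theorem ProjDimLE1.of_iso {A B : C} (e : A ≅ B) (h : ProjDimLE1 A) : ProjDimLE1 B := by
  obtain ⟨P1, P0, d, p, w, hP1, hP0, hd, hp, hexact⟩ := h
  have w' : d ≫ p ≫ e.hom = 0 := by rw [reassoc_of% w, zero_comp]
  refine ⟨P1, P0, d, p ≫ e.hom, w', hP1, hP0, hd, epi_comp _ _, ?_⟩
  exact ShortComplex.exact_of_iso
    (ShortComplex.isoMk (Iso.refl _) (Iso.refl _) e (by simp) (by simp) :
      ShortComplex.mk d p w ≅ ShortComplex.mk d (p ≫ e.hom) w') hexact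

theorem IsMinimalLen1Resolution.comp_iso {P1 P0 A B : C} {d : P1 ⟶ P0} {p : P0 ⟶ A}
    (h : IsMinimalLen1Resolution d p) (e : A ≅ B) : IsMinimalLen1Resolution d (p ≫ e.hom) := by
  obtain ⟨hd, w, hp, hk⟩ := h
  have w' : d ≫ p ≫ e.hom = 0 := by rw [reassoc_of% w, zero_comp]
  have hlift : kernel.lift (p ≫ e.hom) d w' =
      kernel.lift p d w ≫ (kernelCompMono p e.hom).inv := by
    ext; simp
  refine ⟨hd, w', hp.comp_iso e, ?_⟩
  rw [hlift]
  exact hk.comp_iso (kernelCompMono p e.hom).symm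

end Resolutions

namespace ChainComplex

variable (K : ChainComplex C ℕ)

noncomputable def toHomology₀ : K.X 0 ⟶ K.homology 0 :=
  K.pOpcycles 0 ≫ K.isoHomologyι₀.inv

instance : Epi K.toHomology₀ := by
  unfold toHomology₀; infer_instance

lemma d_toHomology₀ : K.d 1 0 ≫ K.toHomology₀ = 0 := by
  simp [toHomology₀]

lemma exact_toHomology₀ : (ShortComplex.mk _ _ K.d_toHomology₀).Exact := by
  apply ShortComplex.exact_of_g_is_cokernel
  exact IsColimit.ofIsoColimit (K.opcyclesIsCokernel 1 0 (by simp))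
    (Cofork.ext K.isoHomologyι₀.symm (by simp [toHomology₀]))

variable {K} in
lemma toHomology₀_naturality {L : ChainComplex C ℕ} (φ : K ⟶ L) :
    K.toHomology₀ ≫ HomologicalComplex.homologyMap φ 0 = φ.f 0 ≫ L.toHomology₀ := by
  simp [toHomology₀]

end ChainComplex

namespace twoComplex

variable {P1 P0 : C} (d : P1 ⟶ P0) {X : ChainComplex C ℕ}

lemma d_one_zero : (twoComplex d).d 1 0 = d :=
  ChainComplex.of_d (twoObj P0 P1) (twoD d) 0

lemma d_succ_succ (n : ℕ) : (twoComplex d).d (n + 2) (n + 1) = 0 :=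
  ChainComplex.of_d (twoObj P0 P1) (twoD d) (n + 1)

variable {d}

noncomputable def mkHomFrom (f₀ : P0 ⟶ X.X 0) (f₁ : P1 ⟶ X.X 1)
    (h : f₁ ≫ X.d 1 0 = d ≫ f₀) : twoComplex d ⟶ X where
  f
    | 0 => f₀
    | 1 => f₁
    | _ + 2 => 0
  comm' := by
    rintro _ j rfl
    match j with
    | 0 =>
      show f₁ ≫ X.d 1 0 = (twoComplex d).d 1 0 ≫ f₀
      rw [d_one_zero]
      exact h
    | j + 1 =>
      show 0 ≫ X.d (j + 2) (j + 1) = (twoComplex d).d (j + 2) (j + 1) ≫ _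
      rw [d_succ_succ, zero_comp, zero_comp]

noncomputable def mkHomTo (g₀ : X.X 0 ⟶ P0) (g₁ : X.X 1 ⟶ P1)
    (h : g₁ ≫ d = X.d 1 0 ≫ g₀) (h₂ : X.d 2 1 ≫ g₁ = 0) : X ⟶ twoComplex d where
  f
    | 0 => g₀
    | 1 => g₁
    | _ + 2 => 0
  comm' := by
    rintro _ j rfl
    match j with
    | 0 =>
      show g₁ ≫ (twoComplex d).d 1 0 = X.d 1 0 ≫ g₀
      rw [d_one_zero]
      exact h
    | 1 =>
      show 0 ≫ (twoComplex d).d 2 1 = X.d 2 1 ≫ g₁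
      rw [zero_comp]
      exact h₂.symm
    | j + 2 =>
      show 0 ≫ (twoComplex d).d (j + 3) (j + 2) = X.d (j + 3) (j + 2) ≫ 0
      rw [zero_comp, comp_zero]

end twoComplex

lemma IsMinimalLen1Resolution.exact {P1 P0 A : C} {d : P1 ⟶ P0} {p : P0 ⟶ A}
    (h : IsMinimalLen1Resolution d p) : (ShortComplex.mk d p h.2.1).Exact :=
  (ShortComplex.exact_iff_epi_kernel_lift _).2 h.2.2.2.2.1

theorem exists_retract_twoComplex {X : ChainComplex C ℕ} [Projective (X.X 0)]
    [Projective (X.X 1)] {P1 P0 : C} {d : P1 ⟶ P0} {p : P0 ⟶ X.homology 0}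
    (hres : IsMinimalLen1Resolution d p) :
    ∃ (i : twoComplex d ⟶ X) (r : X ⟶ twoComplex d),
      i ≫ r = 𝟙 _ ∧ i.f 0 ≫ X.toHomology₀ = p := by
  have hex := hres.exact
  obtain ⟨hd, w, hp, hk⟩ := hres
  have : Projective P0 := hp.1
  have : Epi p := hp.2.1
  have : Projective P1 := hk.1
  obtain ⟨s₀, hs₀⟩ := Projective.factors p X.toHomology₀
  obtain ⟨r₀, hsr₀, hr₀⟩ := hp.exists_retraction hs₀
  have hs₁ : (d ≫ s₀) ≫ X.toHomology₀ = 0 := by rw [Category.assoc, hs₀, w]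
  let s₁ := X.exact_toHomology₀.liftFromProjective (d ≫ s₀) hs₁
  have hr₁ : (X.d 1 0 ≫ r₀) ≫ p = 0 := by rw [Category.assoc, hr₀, X.d_toHomology₀]
  let r₁ := hex.liftFromProjective (X.d 1 0 ≫ r₀) hr₁
  have hsr₁ : s₁ ≫ r₁ = 𝟙 P1 := by
    rw [← cancel_mono d, Category.assoc, hex.liftFromProjective_comp]
    dsimp
    rw [reassoc_of% X.exact_toHomology₀.liftFromProjective_comp, Category.assoc, hsr₀,
      Category.comp_id, Category.id_comp]
  have hdr₁ : X.d 2 1 ≫ r₁ = 0 := by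
    rw [← cancel_mono d, Category.assoc, hex.liftFromProjective_comp]
    simp
  refine ⟨twoComplex.mkHomFrom s₀ s₁ (X.exact_toHomology₀.liftFromProjective_comp _ _),
    twoComplex.mkHomTo r₀ r₁ (hex.liftFromProjective_comp _ _) hdr₁, ?_, hs₀⟩
  ext (_ | _ | n)
  · exact hsr₀
  · exact hsr₁
  · exact (isZero_zero C).eq_of_src _ _

section Splitting

variable {D : Type*} [Category D] [Preadditive D] {ι : Type*} {c : ComplexShape ι}
  {S : ShortComplex (HomologicalComplex D c)}

theorem CategoryTheory.ShortComplex.Splitting.isZero_homology_X₃ [CategoryWithHomology D] (σ : S.Splitting) (n : ι)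
    [Epi (HomologicalComplex.homologyMap S.f n)] : IsZero (S.X₃.homology n) := by
  have hg : HomologicalComplex.homologyMap S.g n = 0 := by
    rw [← cancel_epi (HomologicalComplex.homologyMap S.f n),
      ← HomologicalComplex.homologyMap_comp, S.zero, HomologicalComplex.homologyMap_zero,
      comp_zero]
  rw [IsZero.iff_id_eq_zero, ← HomologicalComplex.homologyMap_id, ← σ.s_g,
    HomologicalComplex.homologyMap_comp, hg, comp_zero]

theorem CategoryTheory.ShortComplex.Splitting.projective_X₃_X (σ : S.Splitting)
    (hS : ∀ n, Projective (S.X₂.X n)) (n : ι) : Projective (S.X₃.X n) :=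
  have : Projective ((HomologicalComplex.eval D c n).obj S.X₂) := hS n
  ((Retract.mk σ.s S.g σ.s_g).map (HomologicalComplex.eval D c n)).projective

end Splitting

theorem splitting_off_minimal_resolution_zero (hC : HasMinimalCovers C) (X : ChainComplex C ℕ)
    (hX : ∀ n, Projective (X.X n)) (hH : ProjDimLE1 (X.homology 0)) :
    ∃ (P1 P0 : C) (d : P1 ⟶ P0) (p : P0 ⟶ X.homology 0), IsMinimalLen1Resolution d p ∧
      ∃ X' : ChainComplex C ℕ, (∀ n, Projective (X'.X n)) ∧ IsZero (X'.homology 0) ∧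
        Nonempty (X ≅ twoComplex d ⊞ X') := by
  obtain ⟨P1, P0, d, p, hres⟩ := exists_isMinimalLen1Resolution hC hH
  have := hX 0
  have := hX 1
  obtain ⟨i, r, hir, hi⟩ := exists_retract_twoComplex hres
  let S := ShortComplex.mk i (cokernel.π i) (cokernel.condition i)
  let σ : S.Splitting := .ofExactOfRetraction S
    (S.exact_of_g_is_cokernel (cokernelIsCokernel i)) r hir (by dsimp [S]; infer_instance)
  have : Epi (HomologicalComplex.homologyMap i 0) := by
    have : Epi p := hres.2.2.1.2.1
    have : Epi ((twoComplex d).toHomology₀ ≫ HomologicalComplex.homologyMap i 0) := by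
      rwa [ChainComplex.toHomology₀_naturality, hi]
    exact epi_of_epi (twoComplex d).toHomology₀ _
  exact ⟨P1, P0, d, p, hres, cokernel i, σ.projective_X₃_X hX, σ.isZero_homology_X₃ 0,
    ⟨σ.isoBinaryBiproduct⟩⟩

section Suspension

lemma susp_d_one_zero (Y : ChainComplex C ℕ) : (susp Y).d 1 0 = 0 :=
  ChainComplex.of_d (suspObj Y) (suspD Y) 0

lemma susp_d_succ (Y : ChainComplex C ℕ) (n : ℕ) :
    (susp Y).d (n + 2) (n + 1) = Y.d (n + 1) n :=
  ChainComplex.of_d (suspObj Y) (suspD Y) (n + 1)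

noncomputable def suspFunctor : ChainComplex C ℕ ⥤ ChainComplex C ℕ where
  obj := susp
  map {Y Z} φ :=
    { f
        | 0 => 0
        | n + 1 => φ.f n
      comm' := by
        rintro _ j rfl
        match j with
        | 0 =>
          show φ.f 0 ≫ (susp Z).d 1 0 = (susp Y).d 1 0 ≫ 0
          rw [susp_d_one_zero, susp_d_one_zero]
          exact comp_zero.trans zero_comp.symm
        | j + 1 =>
          show φ.f (j + 1) ≫ (susp Z).d (j + 2) (j + 1) = (susp Y).d (j + 2) (j + 1) ≫ φ.f j
          rw [susp_d_succ, susp_d_succ]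
          exact φ.comm (j + 1) j }
  map_id Y := by
    ext (_ | n)
    exacts [(isZero_zero C).eq_of_src _ _, rfl]
  map_comp φ ψ := by
    ext (_ | n)
    exacts [(isZero_zero C).eq_of_src _ _, rfl]

instance : (suspFunctor (C := C)).Additive where
  map_add := by
    intro Y Z φ ψ
    ext (_ | n)
    exacts [(isZero_zero C).eq_of_src _ _, rfl]

instance : PreservesBinaryBiproducts (suspFunctor (C := C)) :=
  preservesBinaryBiproducts_of_preservesBiproducts _

/-- Only a monomorphism in the third term when `n = 0`, where it is `0 ⟶ Y₀`. -/
noncomputable def suspScMap (Y : ChainComplex C ℕ) (n : ℕ) :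
    (susp Y).sc' (n + 2) (n + 1) n ⟶ Y.sc' (n + 1) n (n - 1) where
  τ₁ := 𝟙 (Y.X (n + 1))
  τ₂ := 𝟙 (Y.X n)
  τ₃ := match n with
    | 0 => 0
    | k + 1 => 𝟙 (Y.X k)
  comm₁₂ := by
    show 𝟙 _ ≫ Y.d (n + 1) n = (susp Y).d (n + 2) (n + 1) ≫ 𝟙 _
    rw [susp_d_succ]
    exact (Category.id_comp _).trans (Category.comp_id _).symm
  comm₂₃ := by
    match n with
    | 0 =>
      show 𝟙 (Y.X 0) ≫ Y.d 0 0 = (susp Y).d 1 0 ≫ 0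
      rw [Y.shape 0 0 (by simp), susp_d_one_zero]
      exact comp_zero.trans comp_zero.symm
    | k + 1 =>
      show 𝟙 (Y.X (k + 1)) ≫ Y.d (k + 1) k = (susp Y).d (k + 2) (k + 1) ≫ 𝟙 (Y.X k)
      rw [susp_d_succ]
      exact (Category.id_comp _).trans (Category.comp_id _).symm

instance (Y : ChainComplex C ℕ) (n : ℕ) : IsIso (ShortComplex.homologyMap (suspScMap Y n)) := by
  refine ShortComplex.isIso_homologyMap_of_epi_of_isIso_of_mono' _
    (inferInstanceAs (Epi (𝟙 _))) (inferInstanceAs (IsIso (𝟙 _))) ?_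
  match n with
  | 0 => exact ⟨fun _ _ _ => (isZero_zero C).eq_of_tgt _ _⟩
  | k + 1 => exact inferInstanceAs (Mono (𝟙 _))

noncomputable def suspHomologyIso (Y : ChainComplex C ℕ) (n : ℕ) :
    (susp Y).homology (n + 1) ≅ Y.homology n :=
  (susp Y).homologyIsoSc' (n + 2) (n + 1) n (by simp) (by simp) ≪≫
    asIso (ShortComplex.homologyMap (suspScMap Y n)) ≪≫
    (Y.homologyIsoSc' (n + 1) n (n - 1) (by simp) (by cases n <;> simp)).symm

noncomputable def desusp (X : ChainComplex C ℕ) : ChainComplex C ℕ :=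
  ChainComplex.of (fun n => X.X (n + 1)) (fun n => X.d (n + 2) (n + 1))
    (fun _ => X.d_comp_d _ _ _)

lemma desusp_d (X : ChainComplex C ℕ) (n : ℕ) : (desusp X).d (n + 1) n = X.d (n + 2) (n + 1) :=
  ChainComplex.of_d (fun n => X.X (n + 1)) (fun n => X.d (n + 2) (n + 1)) n

noncomputable def isoSuspDesusp (X : ChainComplex C ℕ) (h₀ : IsZero (X.X 0)) :
    X ≅ susp (desusp X) :=
  HomologicalComplex.Hom.isoOfComponents
    (fun | 0 => h₀.isoZero | n + 1 => Iso.refl (X.X (n + 1)))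
    (by
      rintro _ j rfl
      match j with
      | 0 => exact (isZero_zero C).eq_of_tgt _ _
      | j + 1 =>
        show 𝟙 _ ≫ (susp (desusp X)).d (j + 2) (j + 1) = X.d (j + 2) (j + 1) ≫ 𝟙 _
        rw [susp_d_succ, desusp_d, Category.comp_id]
        exact Category.id_comp _)

end Suspension

/-- Let `C` be an abelian category satisfying the minimal cover axiom and
`X` a non-negative chain complex in `C` with `X n` projective and `H_n(X)` of projective
dimension at most 1 for every `n`.  If `X i = 0` for all `i < m`, then
`X ≅ Sᵐ(P[m]) ⊕ X'`, where `P[m]` is the minimal projective resolution of `H_m(X)` and `X'`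
is a degreewise projective chain complex with `H_m(X') = 0`. -/
theorem splitting_off_minimal_resolution
    (hC : HasMinimalCovers C)
    (X : ChainComplex C ℕ) (hcof : ∀ n : ℕ, Projective (X.X n))
    (hpd : ∀ n : ℕ, ProjDimLE1 (X.homology n))
    (m : ℕ) (hm : ∀ i : ℕ, i < m → IsZero (X.X i)) :
    ∃ (P1 P0 : C) (dP : P1 ⟶ P0) (p : P0 ⟶ X.homology m),
      IsMinimalLen1Resolution dP p ∧
      ∃ X' : ChainComplex C ℕ,
        (∀ n : ℕ, Projective (X'.X n)) ∧ IsZero (X'.homology m) ∧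
          Nonempty (X ≅ suspN m (twoComplex dP) ⊞ X') := by
  induction m generalizing X with
  | zero => exact splitting_off_minimal_resolution_zero hC X hcof (hpd 0)
  | succ m ih =>
    let e := isoSuspDesusp X (hm 0 m.succ_pos)
    let eH (k : ℕ) : X.homology (k + 1) ≅ (desusp X).homology k :=
      (HomologicalComplex.homologyFunctor C _ (k + 1)).mapIso e ≪≫ suspHomologyIso _ k
    obtain ⟨P1, P0, d, p, hres, Y', hY', hHY', ⟨f⟩⟩ := ih (desusp X) (fun n => hcof (n + 1))
      (fun n => (hpd (n + 1)).of_iso (eH n)) (fun i hi => hm (i + 1) (by omega))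
    refine ⟨P1, P0, d, p ≫ (eH m).inv, hres.comp_iso (eH m).symm, susp Y', ?_,
      hHY'.of_iso (suspHomologyIso Y' m),
      ⟨e ≪≫ suspFunctor.mapIso f ≪≫ suspFunctor.mapBiprod _ _⟩⟩
    rintro (_ | n)
    exacts [Projective.zero_projective, hY' n]
end

section
/- Let C be an abelian category satisfying the minimal cover axiom, and let X be a non-negative chain complex in C such that X_n is projective for every n ≥ 0. Let m ≥ 0 be such that X_i = 0 for all i < m and H_m(X) = 0. Then X is isomorphic to D^{m+1}(X_m) ⊕ X' for some chain complex X' with X'_n projective for every n and X'_i = 0 for all i ≤ m. -/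
open CategoryTheory CategoryTheory.Limits ZeroObject

universe v u

variable {C : Type u} [Category.{v} C] [Abelian C]

/-!
Since `X_{m-1} = 0`, the vanishing of `H_m(X)` says that `d : X_{m+1} ⟶ X_m` is an epimorphism,
which splits because `X_m` is projective. A section `s` of `d` makes the disk `D^{m+1}(X_m)` a
retract of `X` (through `s` and `𝟙` into `X`, through `d` and `𝟙` back), so
`X ≅ D^{m+1}(X_m) ⊞ X'` where `X'` is the kernel of the retraction. In each degree `X'` is a
retract of `X`, hence projective, and it vanishes in degrees `≤ m`, where the retraction is a
monomorphism.
-/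

namespace HomologicalComplex

variable {V : Type*} [Category V] [HasZeroMorphisms V] [HasZeroObject V]
  {ι : Type*} {c : ComplexShape ι} {X₀ X₁ : V} {f : X₀ ⟶ X₁} {i₀ i₁ : ι}
  (hi₀₁ : c.Rel i₀ i₁) (h : i₀ ≠ i₁) {K : HomologicalComplex V c}
  (φ₀ : K.X i₀ ⟶ X₀) (φ₁ : K.X i₁ ⟶ X₁) (comm : K.d i₀ i₁ ≫ φ₁ = φ₀ ≫ f)
  (hφ : ∀ k, c.Rel k i₀ → K.d k i₀ ≫ φ₀ = 0)

lemma doubleXIso₀_eq : doubleXIso₀ f hi₀₁ = eqToIso (by simp [double]) := rfl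

lemma doubleXIso₁_eq : doubleXIso₁ f hi₀₁ h = eqToIso (by simp [double, h.symm]) := rfl

open scoped Classical in
noncomputable def mkHomToDouble : K ⟶ double f hi₀₁ where
  f k :=
    if hk₀ : k = i₀ then
      eqToHom (by rw [hk₀]) ≫ φ₀ ≫ (doubleXIso₀ f hi₀₁).inv ≫ eqToHom (by rw [hk₀])
    else if hk₁ : k = i₁ then
      eqToHom (by rw [hk₁]) ≫ φ₁ ≫ (doubleXIso₁ f hi₀₁ h).inv ≫ eqToHom (by rw [hk₁])
    else 0
  comm' k₀ k₁ hk := by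
    by_cases h₀ : k₁ = i₀
    · subst h₀
      rw [dif_pos rfl, double_d_eq_zero₁ _ _ _ _ h, comp_zero]
      simp [reassoc_of% hφ k₀ hk]
    · by_cases h₁ : k₁ = i₁
      · subst h₁
        obtain rfl := c.prev_eq hk hi₀₁
        simp [dif_neg h.symm, double_d f hi₀₁ h, reassoc_of% comm]
      · exact (isZero_double_X f hi₀₁ k₁ h₀ h₁).eq_of_tgt _ _

@[simp]
lemma mkHomToDouble_f₀ :
    (mkHomToDouble hi₀₁ h φ₀ φ₁ comm hφ).f i₀ = φ₀ ≫ (doubleXIso₀ f hi₀₁).inv := by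
  simp [mkHomToDouble]

@[simp]
lemma mkHomToDouble_f₁ :
    (mkHomToDouble hi₀₁ h φ₀ φ₁ comm hφ).f i₁ = φ₁ ≫ (doubleXIso₁ f hi₀₁ h).inv := by
  simp [mkHomToDouble, dif_neg h.symm]

end HomologicalComplex

lemma disk_d_succ_self (n : ℕ) (A : C) :
    (disk (n + 1) A).d (n + 1) n =
      eqToHom (if_pos (Or.inl rfl) : (disk (n + 1) A).X (n + 1) = A) ≫
        eqToHom (if_pos (Or.inr rfl) : (disk (n + 1) A).X n = A).symm :=
  (ChainComplex.of_d _ _ n).trans (dif_pos rfl)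

lemma disk_d_succ_of_ne {n j : ℕ} (A : C) (h : j ≠ n) : (disk (n + 1) A).d (j + 1) j = 0 :=
  (ChainComplex.of_d _ _ j).trans (dif_neg (by omega))

open HomologicalComplex in
lemma disk_X_eq_double_X (n : ℕ) (A : C) (k : ℕ) :
    (disk (n + 1) A).X k = (double (𝟙 A) (ComplexShape.down_mk (n + 1) n rfl)).X k := by
  simp only [disk, ChainComplex.of, double, diskObj, Nat.add_right_cancel_iff]
  split_ifs <;> tauto

open HomologicalComplex in
noncomputable def diskIsoDouble (n : ℕ) (A : C) :
    disk (n + 1) A ≅ double (𝟙 A) (ComplexShape.down_mk (n + 1) n rfl) :=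
  Hom.isoOfComponents (fun k => eqToIso (disk_X_eq_double_X n A k)) (by
    rintro _ j rfl
    by_cases hj : j = n
    · subst hj
      rw [disk_d_succ_self, double_d _ _ (by omega), doubleXIso₀_eq, doubleXIso₁_eq]
      simp only [eqToIso.hom, eqToIso.inv, Category.id_comp, eqToHom_trans]
      -- the two sides index by `j + 1` through different `Add ℕ` instances, so only defeq helps
      exact (eqToHom_trans _ _).symm
    · simp [disk_d_succ_of_ne A hj, double_d_eq_zero₀ _ _ _ _ (by omega : j + 1 ≠ n + 1)])

namespace CategoryTheory.Retract

variable {Y X : C} (h : Retract Y X)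

noncomputable def splitting : (ShortComplex.kernelSequence h.r).Splitting :=
  .ofExactOfSection _ (ShortComplex.kernelSequence_exact h.r) h.i h.retract inferInstance

noncomputable def isoBiprodKernel : X ≅ Y ⊞ kernel h.r :=
  h.splitting.isoBinaryBiproduct ≪≫ biprod.braiding _ _

noncomputable def retractKernel : Retract (kernel h.r) X where
  i := kernel.ι h.r
  r := h.splitting.r
  retract := h.splitting.f_r

end CategoryTheory.Retract

namespace HomologicalComplex

variable {ι : Type*} {c : ComplexShape ι}

lemma isZero_kernel_X_of_mono_f {K L : HomologicalComplex C c} (φ : K ⟶ L) (n : ι)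
    [Mono (φ.f n)] : IsZero ((kernel φ).X n) :=
  IsZero.of_mono_eq_zero ((kernel.ι φ).f n) (by
    rw [← cancel_mono (φ.f n), ← comp_f, kernel.condition, zero_f, zero_comp])

lemma epi_d_of_isZero_homology (X : HomologicalComplex C c) {i j : ι} (hij : c.prev j = i)
    (hd : ∀ k, X.d j k = 0) (hH : IsZero (X.homology j)) : Epi (X.d i j) := by
  have hE := (X.exactAt_iff' i j (c.next j) hij rfl).1 ((X.exactAt_iff_isZero_homology j).2 hH)
  exact (ShortComplex.exact_iff_epi _ (hd _)).1 hE

variable (X : HomologicalComplex C c) {i₀ i₁ : ι} (hi₀₁ : c.Rel i₀ i₁) (h : i₀ ≠ i₁)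
  {s : X.X i₁ ⟶ X.X i₀} (hs : s ≫ X.d i₀ i₁ = 𝟙 _)

noncomputable def retractDoubleOfSection : Retract (double (𝟙 (X.X i₁)) hi₀₁) X where
  i := mkHomFromDouble hi₀₁ h s (s ≫ X.d i₀ i₁) (by simp) (by simp)
  r := mkHomToDouble hi₀₁ h (X.d i₀ i₁) (𝟙 _) (by simp) (by simp)
  retract := by ext <;> simp [reassoc_of% hs]

instance : IsIso ((X.retractDoubleOfSection hi₀₁ h hs).r.f i₁) := by
  simp only [retractDoubleOfSection, mkHomToDouble_f₁, Category.id_comp]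
  infer_instance

end HomologicalComplex

theorem splitting_disk_of_isZero_homology_general
    (X : ChainComplex C ℕ) (hcof : ∀ n : ℕ, Projective (X.X n))
    (m : ℕ) (hm : ∀ i : ℕ, i < m → IsZero (X.X i))
    (hH : IsZero (X.homology m)) :
    ∃ X' : ChainComplex C ℕ,
      (∀ n : ℕ, Projective (X'.X n)) ∧ (∀ i : ℕ, i ≤ m → IsZero (X'.X i)) ∧
        Nonempty (X ≅ disk (m + 1) (X.X m) ⊞ X') := by
  have : Epi (X.d (m + 1) m) := X.epi_d_of_isZero_homology (ChainComplex.prev ℕ m)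
    (fun k => if hk : k + 1 = m then (hm k (by omega)).eq_of_tgt _ _ else X.shape _ _ hk) hH
  let R := X.retractDoubleOfSection (ComplexShape.down_mk (m + 1) m rfl) (by omega)
    (Projective.factorThru_comp (𝟙 _) (X.d (m + 1) m))
  refine ⟨kernel R.r, fun n => ?_, fun i hi => ?_,
    ⟨R.isoBiprodKernel ≪≫ biprod.mapIso (diskIsoDouble m _).symm (Iso.refl _)⟩⟩
  · have : Projective ((HomologicalComplex.eval C _ n).obj X) := hcof n
    exact (R.retractKernel.map (HomologicalComplex.eval C _ n)).projective
  · have : Mono (R.r.f i) := by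
      obtain hi | rfl := hi.lt_or_eq
      · exact (hm i hi).mono _
      · dsimp only [R]
        infer_instance
    exact HomologicalComplex.isZero_kernel_X_of_mono_f _ _

/-- **Statement 8.** Let `C` be an abelian category satisfying the minimal cover axiom and
`X` a non-negative chain complex in `C` with `X n` projective for every `n`.  If `X i = 0`
for all `i < m` and `H_m(X) = 0`, then `X ≅ D^{m+1}(X_m) ⊕ X'` for some chain complex `X'`
with projective degrees and `X' i = 0` for all `i ≤ m`. -/
theorem splitting_disk_of_isZero_homology
    (hC : HasMinimalCovers C)
    (X : ChainComplex C ℕ) (hcof : ∀ n : ℕ, Projective (X.X n))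
    (m : ℕ) (hm : ∀ i : ℕ, i < m → IsZero (X.X i))
    (hH : IsZero (X.homology m)) :
    ∃ X' : ChainComplex C ℕ,
      (∀ n : ℕ, Projective (X'.X n)) ∧ (∀ i : ℕ, i ≤ m → IsZero (X'.X i)) ∧
        Nonempty (X ≅ disk (m + 1) (X.X m) ⊞ X') :=
  splitting_disk_of_isZero_homology_general X hcof m hm hH
end
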